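/- arXiv:1206.1483 — 2 statements merged into one kernel-verified Lean document; each statement's English description precedes it below -/
import Mathlib

section
/- For every fixed α > 0 and N ∈ ℕ, the van Cittert deconvolution symbol is asymptotically equivalent to (N+1)(1 + α²|k|²)/(α²|k|²) at large wave numbers: the ratio D̂_{N,α}(k) · α²|k|² / ((N+1)(1 + α²|k|²)) tends to 1 as |k| → ∞. -/
/-- The van Cittert deconvolution symbol `D̂_{N,α}(k)`. -/
noncomputable def vanCittertSymbol (α : ℝ) (N : ℕ) (k : EuclideanSpace ℝ (Fin 3)) : ℝ :=
  ∑ n ∈ Finset.range (N + 1), (α ^ 2 * ‖k‖ ^ 2 / (1 + α ^ 2 * ‖k‖ ^ 2)) ^ n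

open Filter Topology

/-! The ratio `q = α²|k|² / (1 + α²|k|²)` tends to `1` at large wave numbers, so the
symbol, a polynomial in `q`, tends to its value `N + 1` at `q = 1`; and the quantity in the
theorem is exactly `D̂_{N,α}(k) · q / (N + 1)`. -/

theorem Filter.Tendsto.div_one_add_self_nhds_one {ι : Type*} {l : Filter ι} {f : ι → ℝ}
    (hf : Tendsto f l atTop) : Tendsto (fun i => f i / (1 + f i)) l (𝓝 1) := by
  have hinv : Tendsto (fun i => (1 + f i)⁻¹) l (𝓝 0) :=
    tendsto_inv_atTop_zero.comp (tendsto_atTop_add_const_left l 1 hf)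
  have hsub : Tendsto (fun i => 1 - (1 + f i)⁻¹) l (𝓝 1) := by
    simpa using tendsto_const_nhds.sub hinv
  refine hsub.congr' ?_
  filter_upwards [hf.eventually_gt_atTop 0] with i hi
  field_simp
  ring

theorem tendsto_mul_norm_sq_div_one_add_comap_norm_atTop {E : Type*} [NormedAddCommGroup E]
    {α : ℝ} (hα : α ≠ 0) :
    Tendsto (fun k : E => α ^ 2 * ‖k‖ ^ 2 / (1 + α ^ 2 * ‖k‖ ^ 2))
      (comap (‖·‖) atTop) (𝓝 1) := by
  refine Tendsto.div_one_add_self_nhds_one ?_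
  exact ((tendsto_pow_atTop two_ne_zero).comp tendsto_comap).const_mul_atTop (by positivity)

theorem tendsto_vanCittertSymbol_comap_norm_atTop {α : ℝ} (hα : α ≠ 0) (N : ℕ) :
    Tendsto (vanCittertSymbol α N) (comap (‖·‖) atTop) (𝓝 (N + 1)) := by
  have hgeom : Continuous fun r : ℝ => ∑ n ∈ Finset.range (N + 1), r ^ n := by fun_prop
  have hval : ∑ n ∈ Finset.range (N + 1), (1 : ℝ) ^ n = N + 1 := by simp
  rw [← hval]
  exact (hgeom.tendsto 1).comp (tendsto_mul_norm_sq_div_one_add_comap_norm_atTop hα)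

/-- Asymptotic equivalence `D̂_{N,α}(k) ≈ (N+1)(1 + α²|k|²)/(α²|k|²)` at large
wave numbers: the ratio of the two sides tends to `1` as `|k| → ∞`. -/
theorem vanCittertSymbol_asymptotics (α : ℝ) (hα : 0 < α) (N : ℕ) :
    Filter.Tendsto
      (fun k : EuclideanSpace ℝ (Fin 3) =>
        vanCittertSymbol α N k * (α ^ 2 * ‖k‖ ^ 2) /
          (((N : ℝ) + 1) * (1 + α ^ 2 * ‖k‖ ^ 2)))
      (Filter.comap (fun k : EuclideanSpace ℝ (Fin 3) => ‖k‖) Filter.atTop)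
      (nhds 1) := by
  have hlim := ((tendsto_vanCittertSymbol_comap_norm_atTop hα.ne' N).mul
    (tendsto_mul_norm_sq_div_one_add_comap_norm_atTop hα.ne')).div_const ((N : ℝ) + 1)
  rw [mul_one, div_self (by positivity)] at hlim
  refine hlim.congr fun k => ?_
  rw [mul_div_assoc', div_div, mul_comm (1 + _ : ℝ)]
end

section
/- Fix L > 0, α > 0, and s ∈ ℝ. For every family a : 𝒯₃* → ℂ³ of Fourier coefficients with Σ_{k ∈ 𝒯₃*} |k|^{2(s+2)} ‖a_k‖² < ∞, one has lim_{N → ∞} Σ_{k ∈ 𝒯₃*} |k|^{2s} ((1 + α²|k|²) − D̂_{N,α}(k))² ‖a_k‖² = 0. In other words, for every w in the Sobolev space H_{s+2} of mean-zero divergence-free periodic vector fields, the deconvolved fields D_N(w) converge to A w = w − α²Δw in the H_s norm as N → ∞. -/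
/-- The wave vector `(2π/L) m` of the dual lattice `𝒯₃*` associated with `m ∈ ℤ³`. -/
noncomputable def latticeVec (L : ℝ) (m : Fin 3 → ℤ) : EuclideanSpace ℝ (Fin 3) :=
  (WithLp.equiv 2 (Fin 3 → ℝ)).symm (fun i => 2 * Real.pi / L * (m i : ℝ))

lemma latticeVec_norm_lb (L : ℝ) (hL : 0 < L) (m : Fin 3 → ℤ) (hm : m ≠ 0) :
    2 * Real.pi / L ≤ ‖latticeVec L m‖ := by
  obtain ⟨i, hi⟩ : ∃ i, m i ≠ 0 := by
    by_contra h
    push_neg at h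
    exact hm (funext h)
  have hc : 0 < 2 * Real.pi / L := by positivity
  have h1 : (1 : ℝ) ≤ |(m i : ℝ)| := by
    rw [← Int.cast_abs]
    exact_mod_cast Int.one_le_abs hi
  have hcoord : 2 * Real.pi / L ≤ |2 * Real.pi / L * (m i : ℝ)| := by
    rw [abs_mul, abs_of_pos hc]
    nlinarith
  refine hcoord.trans ?_
  rw [EuclideanSpace.norm_eq]
  have : |2 * Real.pi / L * (m i : ℝ)| =
      Real.sqrt (‖2 * Real.pi / L * (m i : ℝ)‖ ^ 2) := by
    rw [Real.sqrt_sq_eq_abs, Real.norm_eq_abs, abs_abs]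
  rw [this]
  apply Real.sqrt_le_sqrt
  have := Finset.single_le_sum (f := fun j => ‖2 * Real.pi / L * (m j : ℝ)‖ ^ 2)
    (fun j _ => by positivity) (Finset.mem_univ i)
  simpa [latticeVec] using this

set_option maxHeartbeats 1000000 in
/-- For `w ∈ H_{s+2}`, the deconvolved fields `D_N(w)` converge to
`A w = w − α²Δw` in the `H_s` norm as `N → ∞`: the squared `H_s` distance,
expressed in Fourier coefficients, tends to `0`. -/
theorem vanCittert_converges_to_helmholtz_Hs (L : ℝ) (hL : 0 < L) (α : ℝ) (hα : 0 < α)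
    (s : ℝ) (a : {m : Fin 3 → ℤ // m ≠ 0} → EuclideanSpace ℂ (Fin 3))
    (ha : Summable fun m : {m : Fin 3 → ℤ // m ≠ 0} =>
      ‖latticeVec L m.1‖ ^ (2 * (s + 2)) * ‖a m‖ ^ 2) :
    Filter.Tendsto
      (fun N : ℕ =>
        ∑' m : {m : Fin 3 → ℤ // m ≠ 0},
          ‖latticeVec L m.1‖ ^ (2 * s) *
            ((1 + α ^ 2 * ‖latticeVec L m.1‖ ^ 2) -
              vanCittertSymbol α N (latticeVec L m.1)) ^ 2 * ‖a m‖ ^ 2)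
      Filter.atTop (nhds 0) := by
  set c : ℝ := 2 * Real.pi / L with hc
  have hcpos : 0 < c := by positivity
  set k : {m : Fin 3 → ℤ // m ≠ 0} → ℝ := fun m => ‖latticeVec L m.1‖ with hk
  have hknorm : ∀ m : {m : Fin 3 → ℤ // m ≠ 0}, k m = ‖latticeVec L m.1‖ := fun m => congrFun hk m
  have hkc : ∀ m : {m : Fin 3 → ℤ // m ≠ 0}, c ≤ k m := fun m => latticeVec_norm_lb L hL m.1 m.2
  have hkpos : ∀ m : {m : Fin 3 → ℤ // m ≠ 0}, 0 < k m := fun m => lt_of_lt_of_le hcpos (hkc m)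
  set x : {m : Fin 3 → ℤ // m ≠ 0} → ℝ := fun m => α ^ 2 * k m ^ 2 with hx
  have hxpos : ∀ m, 0 < x m := fun m => by
    have := hkpos m; positivity
  set r : {m : Fin 3 → ℤ // m ≠ 0} → ℝ := fun m => x m / (1 + x m) with hr
  have hrpos : ∀ m, 0 < r m := fun m => by
    have := hxpos m; exact div_pos this (by linarith)
  have hrlt : ∀ m, r m < 1 := fun m => by
    have := hxpos m
    rw [hr, div_lt_one (by linarith)]; linarith
  -- key identity
  have key : ∀ (N : ℕ) (m : {m : Fin 3 → ℤ // m ≠ 0}),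
      (1 + x m) - vanCittertSymbol α N (latticeVec L m.1)
        = (1 + x m) * r m ^ (N + 1) := by
    intro N m
    have hx1 : (0:ℝ) < 1 + x m := by have := hxpos m; linarith
    have hgeom := geom_sum_mul (r m) (N + 1)
    have hsym : vanCittertSymbol α N (latticeVec L m.1)
        = ∑ n ∈ Finset.range (N + 1), r m ^ n := rfl
    rw [hsym]
    have hne : r m - 1 ≠ 0 := by have := hrlt m; intro h; linarith
    have hsum : ∑ n ∈ Finset.range (N + 1), r m ^ n
        = (r m ^ (N + 1) - 1) / (r m - 1) := by
      field_simp at hgeom ⊢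
      linarith [hgeom]
    rw [hsum, hr]
    field_simp
    ring
  -- the summand
  set B : {m : Fin 3 → ℤ // m ≠ 0} → ℝ := fun m => k m ^ (2 * s) * (1 + x m) ^ 2 * ‖a m‖ ^ 2 with hB
  have hBnonneg : ∀ m, 0 ≤ B m := fun m => by
    have := hkpos m; positivity
  have hform : ∀ (N : ℕ) (m : {m : Fin 3 → ℤ // m ≠ 0}),
      k m ^ (2 * s) *
        ((1 + α ^ 2 * k m ^ 2) - vanCittertSymbol α N (latticeVec L m.1)) ^ 2 *
        ‖a m‖ ^ 2
      = B m * (r m ^ 2) ^ (N + 1) := by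
    intro N m
    have : (1 + α ^ 2 * k m ^ 2) = 1 + x m := rfl
    rw [this, key N m, hB]
    ring
  -- bound
  set C : ℝ := (1 / c ^ 2 + α ^ 2) ^ 2 with hC
  have hbound_le : ∀ m : {m : Fin 3 → ℤ // m ≠ 0}, B m ≤ C * (k m ^ (2 * (s + 2)) * ‖a m‖ ^ 2) := by
    intro m
    have hkp := hkpos m
    have h1 : (1 : ℝ) ≤ k m ^ 2 / c ^ 2 := by
      rw [le_div_iff₀ (by positivity), one_mul]
      have := hkc m
      nlinarith
    have h2 : (1 + x m) ≤ (1 / c ^ 2 + α ^ 2) * k m ^ 2 := by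
      rw [hx]
      have : (1:ℝ) ≤ 1 / c ^ 2 * k m ^ 2 := by
        rw [div_mul_eq_mul_div, one_mul]; exact h1
      nlinarith
    have h3 : (1 + x m) ^ 2 ≤ C * (k m ^ 2) ^ 2 := by
      rw [hC]
      have hpos : (0:ℝ) < 1 + x m := by have := hxpos m; linarith
      nlinarith
    have hk4 : k m ^ (2 * s) * (k m ^ 2) ^ 2 = k m ^ (2 * (s + 2)) := by
      have : ((k m ^ 2) ^ 2 : ℝ) = k m ^ ((4 : ℕ) : ℝ) := by
        rw [Real.rpow_natCast]; ring
      rw [this, ← Real.rpow_add hkp]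
      norm_num
      ring_nf
    calc B m = k m ^ (2 * s) * ‖a m‖ ^ 2 * (1 + x m) ^ 2 := by rw [hB]; ring
      _ ≤ k m ^ (2 * s) * ‖a m‖ ^ 2 * (C * (k m ^ 2) ^ 2) := by
          apply mul_le_mul_of_nonneg_left h3
          have := hkp; positivity
      _ = C * (k m ^ (2 * s) * (k m ^ 2) ^ 2 * ‖a m‖ ^ 2) := by ring
      _ = C * (k m ^ (2 * (s + 2)) * ‖a m‖ ^ 2) := by rw [hk4]
  have ha' : Summable fun m : {m : Fin 3 → ℤ // m ≠ 0} => k m ^ (2 * (s + 2)) * ‖a m‖ ^ 2 := by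
    simp only [hknorm]; exact ha
  have hBsum : Summable B :=
    Summable.of_nonneg_of_le hBnonneg hbound_le (ha'.mul_left C)
  -- apply dominated convergence
  have hlim : ∀ m : {m : Fin 3 → ℤ // m ≠ 0}, Filter.Tendsto (fun N : ℕ => B m * (r m ^ 2) ^ (N + 1))
      Filter.atTop (nhds 0) := by
    intro m
    have h0 : (0:ℝ) ≤ r m ^ 2 := sq_nonneg _
    have h1 : r m ^ 2 < 1 := by
      have := hrpos m; have := hrlt m; nlinarith
    have h2 : Filter.Tendsto (fun N : ℕ => (r m ^ 2) ^ (N + 1))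
        Filter.atTop (nhds 0) :=
      (tendsto_pow_atTop_nhds_zero_of_lt_one h0 h1).comp
        (Filter.tendsto_add_atTop_nat 1)
    have h3 := h2.const_mul (B m)
    simpa using h3
  have hbd : ∀ (N : ℕ) (m : {m : Fin 3 → ℤ // m ≠ 0}), ‖B m * (r m ^ 2) ^ (N + 1)‖ ≤ B m := by
    intro N m
    have hq : (r m ^ 2) ^ (N + 1) ≤ 1 := by
      apply pow_le_one₀ (sq_nonneg _)
      have := hrpos m; have := hrlt m; nlinarith
    have hq0 : (0:ℝ) ≤ (r m ^ 2) ^ (N + 1) := by positivity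
    rw [Real.norm_eq_abs, abs_of_nonneg (mul_nonneg (hBnonneg m) hq0)]
    calc B m * (r m ^ 2) ^ (N + 1) ≤ B m * 1 :=
          mul_le_mul_of_nonneg_left hq (hBnonneg m)
      _ = B m := mul_one _
  have hmain := tendsto_tsum_of_dominated_convergence
    (f := fun (N : ℕ) (m : {m : Fin 3 → ℤ // m ≠ 0}) => B m * (r m ^ 2) ^ (N + 1))
    (g := fun _ : {m : Fin 3 → ℤ // m ≠ 0} => (0:ℝ)) hBsum hlim
    (Filter.Eventually.of_forall fun N => hbd N)
  simp only [tsum_zero] at hmain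
  refine hmain.congr fun N => tsum_congr fun m => ?_
  rw [← hknorm m]
  exact (hform N m).symm
end
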